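/- arXiv:1703.05725 — 2 statements merged into one kernel-verified Lean document; each statement's English description precedes it below -/
import Mathlib

section
/- For any element u of Q, the subgroup of the free product Q ∗ ℤ generated by c_u and d_u is trivial if and only if u = 1 in Q. -/
open Monoid

/-- For any `u ∈ Q`, the subgroup of `Q ∗ ℤ` generated by
`c_u = t u t⁻² u t` and `d_u = u t u t⁻¹ u` is trivial if and only if `u = 1`. -/
theorem stmt_2 (Q : Type*) [Group Q] (u : Q)
    (t : Coprod Q (Multiplicative ℤ))
    (ht : t = Coprod.inr (Multiplicative.ofAdd (1 : ℤ)))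
    (cu du : Coprod Q (Multiplicative ℤ))
    (hc : cu = t * Coprod.inl u * t⁻¹ * t⁻¹ * Coprod.inl u * t)
    (hd : du = Coprod.inl u * t * Coprod.inl u * t⁻¹ * Coprod.inl u) :
    Subgroup.closure {cu, du} = ⊥ ↔ u = 1 := by
  constructor
  · intro h
    have hcm : cu ∈ Subgroup.closure {cu, du} :=
      Subgroup.subset_closure (by simp)
    have hdm : du ∈ Subgroup.closure {cu, du} :=
      Subgroup.subset_closure (by simp)
    rw [h, Subgroup.mem_bot] at hcm hdm
    set φ : Coprod Q (Multiplicative ℤ) →* Q := Coprod.lift (MonoidHom.id Q) 1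
    have h2 : u * u = 1 := by
      have := congrArg φ hcm
      simpa [hc, ht, φ, mul_assoc] using this
    have h3 : u * (u * u) = 1 := by
      have := congrArg φ hdm
      simpa [hd, ht, φ, mul_assoc] using this
    rw [h2, mul_one] at h3
    exact h3
  · intro h
    subst h
    have hcu : cu = 1 := by simp [hc, mul_assoc]
    have hdu : du = 1 := by simp [hd, mul_assoc]
    simp [hcu, hdu]
end

section
/- Let V be a type equipped with a simple graph structure T that is a tree (i.e., T is connected and has no cycles), and let a group K act on V by automorphisms of T (the action of each element of K preserves adjacency). Assume that for every pair of adjacent vertices v, w of T, the subgroup of K fixing both v and w is cyclic (where the trivial group counts as cyclic). Let H₁ and H₂ be subgroups of K such that H₁ fixes some vertex of T and H₂ fixes some vertex of T, and suppose there exist elements x, y ∈ H₁ ∩ H₂ such that the homomorphism from the free group on two generators to K sending the generators to x and y is injective. Then there exists a vertex of T fixed by every element of H₁ and by every element of H₂; consequently, the subgroup of K generated by H₁ ∪ H₂ fixes a vertex of T. -/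
lemma list_map_eq_self {α : Type*} {f : α → α} :
    ∀ l : List α, l.map f = l → ∀ a ∈ l, f a = a := by
  intro l
  induction l with
  | nil => simp
  | cons b t ih =>
    intro h a ha
    simp only [List.map_cons, List.cons.injEq] at h
    rcases List.mem_cons.mp ha with rfl | ha
    · exact h.1
    · exact ih h.2 a ha

/-- Let a group `K` act on a tree `T` (a connected acyclic simple graph)
by graph automorphisms, with every edge stabilizer (pointwise stabilizer of the two
endpoints of an edge) cyclic.  If `H₁, H₂ ≤ K` each fix a vertex, and `H₁ ∩ H₂`
contains elements `x, y` generating a free subgroup of rank 2 (i.e. the induced map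
from the free group on two generators is injective), then some vertex is fixed by
all of `H₁` and all of `H₂`; consequently `H₁ ⊔ H₂` fixes a vertex. -/
theorem stmt_4 (V : Type*) (T : SimpleGraph V) (hT : T.IsTree)
    (K : Type*) [Group K] [MulAction K V]
    (hact : ∀ (k : K) (v w : V), T.Adj v w → T.Adj (k • v) (k • w))
    (hedge : ∀ v w : V, T.Adj v w →
      IsCyclic ↥(MulAction.stabilizer K v ⊓ MulAction.stabilizer K w))
    (H₁ H₂ : Subgroup K)
    (hH₁ : ∃ v : V, ∀ h ∈ H₁, h • v = v)
    (hH₂ : ∃ v : V, ∀ h ∈ H₂, h • v = v)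
    (x y : K) (hx : x ∈ H₁ ⊓ H₂) (hy : y ∈ H₁ ⊓ H₂)
    (hfree : Function.Injective ⇑(FreeGroup.lift ![x, y] : FreeGroup (Fin 2) →* K)) :
    ∃ v : V, (∀ h ∈ H₁, h • v = v) ∧ (∀ h ∈ H₂, h • v = v) ∧
      ∀ k ∈ H₁ ⊔ H₂, k • v = v := by
  obtain ⟨v₁, hv₁⟩ := hH₁
  obtain ⟨v₂, hv₂⟩ := hH₂
  -- claim v₁ = v₂
  have key : v₁ = v₂ := by
    by_contra hne
    -- the unique path from v₁ to v₂
    obtain ⟨p, hp, hpu⟩ := hT.existsUnique_path v₁ v₂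
    have hpnil : ¬ p.Nil := by
      intro h
      exact hne (SimpleGraph.Walk.Nil.eq h)
    set w := p.getVert 1 with hw
    have hadj : T.Adj v₁ w := p.adj_snd hpnil
    have hwsupp : w ∈ p.support := by
      rw [SimpleGraph.Walk.mem_support_iff_exists_getVert]
      exact ⟨1, hw.symm, SimpleGraph.Walk.not_nil_iff_lt_length.mp hpnil⟩
    -- each k fixing v₁ and v₂ fixes w
    have fixw : ∀ k : K, k • v₁ = v₁ → k • v₂ = v₂ → k • w = w := by
      intro k h1 h2
      let f : T →g T := ⟨fun u => k • u, fun h => hact k _ _ h⟩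
      have hq : ((p.map f).copy h1 h2).IsPath := by
        rw [SimpleGraph.Walk.isPath_copy]
        exact SimpleGraph.Walk.map_isPath_of_injective (MulAction.injective k) hp
      have := hpu _ hq
      have hsupp : ((p.map f).copy h1 h2).support = p.support := by rw [this]
      rw [SimpleGraph.Walk.support_copy, SimpleGraph.Walk.support_map] at hsupp
      exact list_map_eq_self p.support hsupp w hwsupp
    -- x, y lie in the (cyclic) edge stabilizer
    have hcyc := hedge v₁ w hadj
    set S := MulAction.stabilizer K v₁ ⊓ MulAction.stabilizer K w with hS
    have hxS : x ∈ S := ⟨hv₁ x hx.1, fixw x (hv₁ x hx.1) (hv₂ x hx.2)⟩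
    have hyS : y ∈ S := ⟨hv₁ y hy.1, fixw y (hv₁ y hy.1) (hv₂ y hy.2)⟩
    have hcomm : x * y = y * x := by
      obtain ⟨g, hg⟩ := hcyc.exists_generator
      obtain ⟨m, hm⟩ := Subgroup.mem_zpowers_iff.mp (hg ⟨x, hxS⟩)
      obtain ⟨n, hn⟩ := Subgroup.mem_zpowers_iff.mp (hg ⟨y, hyS⟩)
      have hxm : (g : K) ^ m = x := by simpa using congrArg Subtype.val hm
      have hyn : (g : K) ^ n = y := by simpa using congrArg Subtype.val hn
      rw [← hxm, ← hyn, ← zpow_add, ← zpow_add, add_comm]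
    -- contradiction with freeness
    have h01 : (FreeGroup.lift ![x, y] : FreeGroup (Fin 2) →* K)
        (FreeGroup.of 0 * FreeGroup.of 1)
        = (FreeGroup.lift ![x, y] : FreeGroup (Fin 2) →* K)
        (FreeGroup.of 1 * FreeGroup.of 0) := by
      simp [hcomm]
    have := hfree h01
    have hne2 : FreeGroup.of (0 : Fin 2) * FreeGroup.of 1
        ≠ FreeGroup.of 1 * FreeGroup.of 0 := by decide
    exact hne2 this
  subst key
  refine ⟨v₁, hv₁, hv₂, ?_⟩
  intro k hk
  have hle : H₁ ⊔ H₂ ≤ MulAction.stabilizer K v₁ :=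
    sup_le (fun a ha => hv₁ a ha) (fun a ha => hv₂ a ha)
  exact hle hk
end
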